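/- Let μ, ν : 𝔻 → ℝ be Lipschitz continuous with respect to the Euclidean metric, with Lipschitz constants C_μ and C_ν respectively, and let R > 0 with r_R = tanh R. Let z_i, w_j ∈ 𝔻, let m̃ be a disk Möbius transformation with m̃(0) = z_i, let h > 0, and let Δ₁, …, Δ_K be pairwise disjoint Borel subsets of 𝔻 with ⋃_k Δ_k = Ω_{0,R} and points p_k ∈ Δ_k satisfying Δ_k ⊆ {z : |z − p_k| ≤ h} for each k; set α_k = ∫_{Δ_k} 1 dvol_H. Then | d^R_{μ,ν}(z_i, w_j) − inf over disk Möbius m with m(z_i) = w_j of Σ_{k=1}^K α_k · |μ(m̃(p_k)) − ν(m(m̃(p_k)))| | ≤ (C_μ + C_ν) · (∫_{Ω_{0,R}} 1 dvol_H) · (1 − r_R)⁻² · h. -/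

import Mathlib

open Complex MeasureTheory ENNReal

noncomputable section

/-- The open unit disk in `ℂ`. -/
def unitDisk : Set ℂ := {z : ℂ | ‖z‖ < 1}

/-- A disk Möbius transformation: `z ↦ τ (z - a)/(1 - conj a · z)` with `a ∈ 𝔻`, `|τ| = 1`. -/
def IsDiskMobius (m : ℂ → ℂ) : Prop :=
  ∃ a τ : ℂ, ‖a‖ < 1 ∧ ‖τ‖ = 1 ∧
    ∀ z : ℂ, m z = τ * (z - a) / (1 - (starRingEnd ℂ) a * z)

/-- The hyperbolic disk `Ω_{z₀,R}` of radius `R` centered at `z₀`. -/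
def hypDisk (z₀ : ℂ) (R : ℝ) : Set ℂ :=
  {z : ℂ | ‖z‖ < 1 ∧
    ‖(z - z₀) / (1 - (starRingEnd ℂ) z₀ * z)‖ < Real.tanh R}

/-- The hyperbolic area measure `dvol_H = (1 - |z|²)⁻² dλ` on `ℂ`. -/
def volH : Measure ℂ :=
  volume.withDensity (fun z => ENNReal.ofReal (((1 - ‖z‖ ^ 2) ^ 2)⁻¹))

/-- The local dissimilarity distance `d^R_{μ,ν}(z₀,w₀)`, valued in `[0,∞]`. -/
def dR (R : ℝ) (μ ν : ℂ → ℝ) (z₀ w₀ : ℂ) : ℝ≥0∞ :=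
  ⨅ m : {m : ℂ → ℂ // IsDiskMobius m ∧ m z₀ = w₀},
    ∫⁻ z in hypDisk z₀ R, ENNReal.ofReal |μ z - ν (m.1 z)| ∂volH

/-- The measure on `𝔻` with density `μ` w.r.t. the hyperbolic measure. -/
def muH (μ : ℂ → ℝ) : Measure ℂ :=
  (volH.restrict unitDisk).withDensity (fun z => ENNReal.ofReal (μ z))

/-- The generalized Kantorovich transportation cost `T^R_d(μ,ν)`. -/
def TRd (R : ℝ) (μ ν : ℂ → ℝ) : ℝ≥0∞ :=
  ⨅ π : {π : Measure (ℂ × ℂ) //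
      π.map Prod.fst = muH μ ∧ π.map Prod.snd = muH ν},
    ∫⁻ p, dR R μ ν p.1 p.2 ∂π.1

def aOf (z₀ w₀ σ : ℂ) : ℂ :=
  (z₀ - w₀ * (starRingEnd ℂ) σ) / (1 - (starRingEnd ℂ) z₀ * w₀ * (starRingEnd ℂ) σ)

def tauOf (z₀ w₀ σ : ℂ) : ℂ :=
  σ * (1 - (starRingEnd ℂ) z₀ * w₀ * (starRingEnd ℂ) σ) / (1 - z₀ * (starRingEnd ℂ) w₀ * σ)

/-- The Möbius transformation `m_{z₀,w₀,σ}`. -/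
def stdMobius (z₀ w₀ σ : ℂ) (z : ℂ) : ℂ :=
  tauOf z₀ w₀ σ * (z - aOf z₀ w₀ σ) / (1 - (starRingEnd ℂ) (aOf z₀ w₀ σ) * z)

/-- `Φ(z₀,w₀,σ)`. -/
def Phi (R : ℝ) (μ ν : ℂ → ℝ) (z₀ w₀ σ : ℂ) : ℝ≥0∞ :=
  ∫⁻ z in hypDisk z₀ R, ENNReal.ofReal |μ z - ν (stdMobius z₀ w₀ σ z)| ∂volH

/-!
Pulling back along `m̃`, which preserves `vol_H` and maps `Ω_{0,R}` onto `Ω_{z_i,R}`, the integral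
defining `d^R` becomes `∫_{Ω_{0,R}} |μ ∘ m̃ - ν ∘ m ∘ m̃| dvol_H`, of which the sum is a Riemann sum
over the cells `Δ_k`. Disk automorphisms preserve `|u - v|² / ((1 - |u|²)(1 - |v|²))`, which
dominates `|u - v|²` and on `‖u‖, ‖v‖ ≤ r` is at most `|u - v|² / (1 - r²)²`; so `m̃` and `m ∘ m̃`
are `(1 - r_R)⁻²`-Lipschitz on `Ω_{0,R}`, the integrand oscillates by at most
`(C_μ + C_ν)(1 - r_R)⁻² h` on each cell, and integral and sum differ by at most this times
`vol_H(Ω_{0,R})` for every `m`, hence also after taking infima.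
-/

open ComplexConjugate Function

def blaschke (a τ z : ℂ) : ℂ := τ * (z - a) / (1 - conj a * z)

def blaschkeDeriv (a τ z : ℂ) : ℂ := τ * (1 - conj a * a) / (1 - conj a * z) ^ 2

/-- Equals `sinh² d(u, v)` for the hyperbolic distance `d` of `volH`, for which
`d(0, z) = artanh ‖z‖`. -/
def sinhSqDist (u v : ℂ) : ℝ := normSq (u - v) / ((1 - normSq u) * (1 - normSq v))

section Blaschke

variable {a τ z u v : ℂ}

theorem normSq_one_sub_conj_mul (a z : ℂ) :
    normSq (1 - conj a * z) = normSq (z - a) + (1 - normSq a) * (1 - normSq z) := by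
  simp only [normSq_apply, sub_re, sub_im, mul_re, mul_im, conj_re, conj_im, one_re, one_im]
  ring

theorem one_sub_normSq_pos (hz : ‖z‖ < 1) : 0 < 1 - normSq z := by
  rw [← Complex.sq_norm, sub_pos]
  exact pow_lt_one₀ (norm_nonneg z) hz two_ne_zero

theorem one_sub_mul_conj_ne_zero (hz : ‖z‖ < 1) : 1 - z * conj z ≠ 0 := by
  rw [mul_conj]
  exact_mod_cast (one_sub_normSq_pos hz).ne'

theorem mul_conj_of_norm_eq_one (hτ : ‖τ‖ = 1) : τ * conj τ = 1 := by
  rw [mul_conj, normSq_eq_norm_sq, hτ, one_pow, Complex.ofReal_one]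

theorem normSq_one_sub_conj_mul_pos (ha : ‖a‖ < 1) (hz : ‖z‖ < 1) :
    0 < normSq (1 - conj a * z) := by
  rw [normSq_one_sub_conj_mul]
  exact add_pos_of_nonneg_of_pos (normSq_nonneg _)
    (mul_pos (one_sub_normSq_pos ha) (one_sub_normSq_pos hz))

theorem one_sub_conj_mul_ne_zero (ha : ‖a‖ < 1) (hz : ‖z‖ < 1) : 1 - conj a * z ≠ 0 :=
  normSq_pos.1 (normSq_one_sub_conj_mul_pos ha hz)

theorem one_sub_normSq_blaschke (ha : ‖a‖ < 1) (hτ : ‖τ‖ = 1) (hz : ‖z‖ < 1) :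
    1 - normSq (blaschke a τ z)
      = (1 - normSq a) * (1 - normSq z) / normSq (1 - conj a * z) := by
  have hd := normSq_one_sub_conj_mul_pos ha hz
  rw [blaschke, normSq_div, normSq_mul, normSq_eq_norm_sq τ, hτ, one_pow, one_mul,
    eq_div_iff hd.ne', sub_mul, div_mul_cancel₀ _ hd.ne', normSq_one_sub_conj_mul]
  ring

theorem norm_blaschke_lt_one (ha : ‖a‖ < 1) (hτ : ‖τ‖ = 1) (hz : ‖z‖ < 1) :
    ‖blaschke a τ z‖ < 1 := by
  have hpos : 0 < 1 - normSq (blaschke a τ z) := by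
    rw [one_sub_normSq_blaschke ha hτ hz]
    exact div_pos (mul_pos (one_sub_normSq_pos ha) (one_sub_normSq_pos hz))
      (normSq_one_sub_conj_mul_pos ha hz)
  rw [← sq_lt_one_iff₀ (norm_nonneg _), Complex.sq_norm]
  linarith

theorem blaschke_sub_blaschke (ha : ‖a‖ < 1) (hu : ‖u‖ < 1) (hv : ‖v‖ < 1) :
    blaschke a τ u - blaschke a τ v
      = τ * (1 - normSq a) * (u - v) / ((1 - conj a * u) * (1 - conj a * v)) := by
  rw [blaschke, blaschke, div_sub_div _ _ (one_sub_conj_mul_ne_zero ha hu)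
    (one_sub_conj_mul_ne_zero ha hv), ← mul_conj]
  ring

theorem sinhSqDist_blaschke (ha : ‖a‖ < 1) (hτ : ‖τ‖ = 1) (hu : ‖u‖ < 1) (hv : ‖v‖ < 1) :
    sinhSqDist (blaschke a τ u) (blaschke a τ v) = sinhSqDist u v := by
  have hcast : (1 : ℂ) - normSq a = ((1 - normSq a : ℝ) : ℂ) := by push_cast; rfl
  rw [sinhSqDist, sinhSqDist, blaschke_sub_blaschke ha hu hv, one_sub_normSq_blaschke ha hτ hu,
    one_sub_normSq_blaschke ha hτ hv]
  simp only [normSq_div, normSq_mul, normSq_eq_norm_sq τ, hτ, one_pow, hcast, normSq_ofReal]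
  have hA := (normSq_one_sub_conj_mul_pos ha hu).ne'
  have hB := (normSq_one_sub_conj_mul_pos ha hv).ne'
  have hα := (one_sub_normSq_pos ha).ne'
  generalize normSq (1 - conj a * u) = A at *
  generalize normSq (1 - conj a * v) = B at *
  field_simp

theorem blaschke_inv_blaschke (ha : ‖a‖ < 1) (hτ : ‖τ‖ = 1) (hz : ‖z‖ < 1) :
    blaschke (-(τ * a)) (conj τ) (blaschke a τ z) = z := by
  have hd : 1 - z * conj a ≠ 0 := by rw [mul_comm]; exact one_sub_conj_mul_ne_zero ha hz
  have hα := one_sub_mul_conj_ne_zero ha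
  simp only [blaschke, map_neg, map_mul]
  field_simp
  rw [mul_comm (conj τ), mul_conj_of_norm_eq_one hτ, div_eq_iff (by convert hα using 1; ring)]
  ring

theorem blaschke_blaschke_inv (ha : ‖a‖ < 1) (hτ : ‖τ‖ = 1) (hz : ‖z‖ < 1) :
    blaschke a τ (blaschke (-(τ * a)) (conj τ) z) = z := by
  have ha' : ‖-(τ * a)‖ < 1 := by rwa [norm_neg, norm_mul, hτ, one_mul]
  have h := blaschke_inv_blaschke ha' (by rwa [norm_conj]) hz
  have hττ : conj τ * τ = 1 := by rw [mul_comm, mul_conj_of_norm_eq_one hτ]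
  rwa [conj_conj, mul_neg, neg_neg, ← mul_assoc, hττ, one_mul] at h

/-- The case `w = 0` of the invariance of the pseudo-hyperbolic distance
`‖(z - w) / (1 - conj w * z)‖` under `blaschke a τ`. -/
theorem blaschke_sub_blaschke_zero_div (ha : ‖a‖ < 1) (hτ : ‖τ‖ = 1) (hz : ‖z‖ < 1) :
    (blaschke a τ z - blaschke a τ 0) / (1 - conj (blaschke a τ 0) * blaschke a τ z)
      = τ * z := by
  have hd : 1 - z * conj a ≠ 0 := by rw [mul_comm]; exact one_sub_conj_mul_ne_zero ha hz
  simp only [blaschke, map_neg, map_mul, map_div₀, map_one, mul_zero, zero_sub, sub_zero]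
  field_simp
  have hden : 1 - z * conj a - -(τ * (z - a) * conj a * conj τ) = 1 - a * conj a := by
    linear_combination ((z - a) * conj a) * mul_conj_of_norm_eq_one hτ
  rw [hden, div_eq_iff (one_sub_mul_conj_ne_zero ha)]
  ring

theorem hasDerivAt_blaschke (ha : ‖a‖ < 1) (hz : ‖z‖ < 1) :
    HasDerivAt (blaschke a τ) (blaschkeDeriv a τ z) z := by
  have hnum : HasDerivAt (fun z => τ * (z - a)) τ z := by
    simpa using ((hasDerivAt_id z).sub_const a).const_mul τ
  have hden : HasDerivAt (fun z => 1 - conj a * z) (-conj a) z := by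
    simpa using ((hasDerivAt_id z).const_mul (conj a)).const_sub 1
  have h := hnum.div hden (one_sub_conj_mul_ne_zero ha hz)
  rwa [show τ * (1 - conj a * z) - τ * (z - a) * -conj a = τ * (1 - conj a * a) by ring] at h

/-- The Schwarz–Pick equality `|m'(z)| = (1 - |m z|²) / (1 - |z|²)`. -/
theorem normSq_blaschkeDeriv (ha : ‖a‖ < 1) (hτ : ‖τ‖ = 1) (hz : ‖z‖ < 1) :
    normSq (blaschkeDeriv a τ z) = ((1 - normSq (blaschke a τ z)) / (1 - normSq z)) ^ 2 := by
  have hcast : (1 : ℂ) - conj a * a = ((1 - normSq a : ℝ) : ℂ) := by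
    rw [mul_comm, mul_conj]; push_cast; rfl
  have hz' := (one_sub_normSq_pos hz).ne'
  rw [one_sub_normSq_blaschke ha hτ hz, blaschkeDeriv, normSq_div, normSq_mul,
    normSq_eq_norm_sq τ, hτ, one_pow, one_mul, hcast, normSq_ofReal, map_pow]
  field_simp

end Blaschke

section HyperbolicMeasure

variable {a τ : ℂ}

theorem hypDisk_zero (R : ℝ) : hypDisk 0 R = Metric.ball 0 (Real.tanh R) := by
  ext z
  simp only [hypDisk, map_zero, zero_mul, sub_zero, div_one, mem_ball_zero_iff]
  exact ⟨And.right, fun hz => ⟨hz.trans (Real.tanh_lt_one R), hz⟩⟩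

theorem hypDisk_zero_subset_unitDisk (R : ℝ) : hypDisk 0 R ⊆ unitDisk := fun _ hz => hz.1

theorem image_blaschke_hypDisk_zero (ha : ‖a‖ < 1) (hτ : ‖τ‖ = 1) (R : ℝ) :
    blaschke a τ '' hypDisk 0 R = hypDisk (blaschke a τ 0) R := by
  ext z
  constructor
  · rintro ⟨w, hw, rfl⟩
    have hwR : ‖w‖ < Real.tanh R := by rwa [hypDisk_zero, mem_ball_zero_iff] at hw
    refine ⟨norm_blaschke_lt_one ha hτ hw.1, ?_⟩
    rwa [blaschke_sub_blaschke_zero_div ha hτ hw.1, norm_mul, hτ, one_mul]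
  · rintro ⟨hz1, hzR⟩
    have ha' : ‖-(τ * a)‖ < 1 := by rwa [norm_neg, norm_mul, hτ, one_mul]
    set w := blaschke (-(τ * a)) (conj τ) z
    have hw1 : ‖w‖ < 1 := norm_blaschke_lt_one ha' (by rwa [norm_conj]) hz1
    have hwz : blaschke a τ w = z := blaschke_blaschke_inv ha hτ hz1
    refine ⟨w, ?_, hwz⟩
    rw [hypDisk_zero, mem_ball_zero_iff]
    have hratio := blaschke_sub_blaschke_zero_div ha hτ hw1
    rw [hwz] at hratio
    simpa [hratio, hτ] using hzR

theorem measurable_volH_density :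
    Measurable fun z : ℂ => ENNReal.ofReal (((1 - ‖z‖ ^ 2) ^ 2)⁻¹) := by
  fun_prop

theorem setLIntegral_image_blaschke (ha : ‖a‖ < 1) (hτ : ‖τ‖ = 1) {s : Set ℂ}
    (hs : MeasurableSet s) (hs1 : s ⊆ unitDisk) (F : ℂ → ℝ≥0∞) :
    ∫⁻ z in blaschke a τ '' s, F z ∂volH = ∫⁻ w in s, F (blaschke a τ w) ∂volH := by
  have hderiv : ∀ z ∈ s, HasFDerivWithinAt (blaschke a τ)
      (((1 : ℂ →L[ℂ] ℂ).smulRight (blaschkeDeriv a τ z)).restrictScalars ℝ) s z :=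
    fun z hz => ((hasDerivAt_blaschke ha (hs1 hz)).hasFDerivAt.restrictScalars ℝ).hasFDerivWithinAt
  have hinj : Set.InjOn (blaschke a τ) s :=
    Set.LeftInvOn.injOn fun z hz => blaschke_inv_blaschke ha hτ (hs1 hz)
  have hfin : ∀ t : Set ℂ, ∀ᵐ z ∂volume.restrict t, ENNReal.ofReal (((1 - ‖z‖ ^ 2) ^ 2)⁻¹) < ⊤ :=
    fun _ => ae_of_all _ fun _ => ofReal_lt_top
  rw [volH, setLIntegral_withDensity_eq_setLIntegral_mul_non_measurable _
      measurable_volH_density _ (measurable_image_of_fderivWithin hs hderiv hinj) (hfin _),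
    setLIntegral_withDensity_eq_setLIntegral_mul_non_measurable _
      measurable_volH_density _ hs (hfin _),
    lintegral_image_eq_lintegral_abs_det_fderiv_mul volume hs hderiv hinj]
  refine setLIntegral_congr_fun hs fun z hz => ?_
  have hz1 : ‖z‖ < 1 := hs1 hz
  have hdet : (((1 : ℂ →L[ℂ] ℂ).smulRight (blaschkeDeriv a τ z)).restrictScalars ℝ).det
      = normSq (blaschkeDeriv a τ z) := by
    simp [ContinuousLinearMap.det, LinearMap.det_restrictScalars, Algebra.norm_complex_eq]
  have hdensity : normSq (blaschkeDeriv a τ z) * ((1 - ‖blaschke a τ z‖ ^ 2) ^ 2)⁻¹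
      = ((1 - ‖z‖ ^ 2) ^ 2)⁻¹ := by
    have := (one_sub_normSq_pos hz1).ne'
    have := (one_sub_normSq_pos (norm_blaschke_lt_one ha hτ hz1)).ne'
    rw [normSq_blaschkeDeriv ha hτ hz1, Complex.sq_norm, Complex.sq_norm]
    field_simp
  simp only [Pi.mul_apply]
  rw [hdet, abs_of_nonneg (normSq_nonneg _), ← mul_assoc,
    ← ENNReal.ofReal_mul (normSq_nonneg _), hdensity]

theorem volH_ball_lt_top {r : ℝ} (hr : r < 1) : volH (Metric.ball 0 r) < ⊤ := by
  rw [volH, withDensity_apply _ measurableSet_ball]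
  refine setLIntegral_lt_top_of_le_nnreal measure_ball_lt_top.ne
    ⟨(((1 - r ^ 2) ^ 2)⁻¹).toNNReal, fun z hz => ENNReal.ofReal_le_ofReal ?_⟩
  rw [mem_ball_zero_iff] at hz
  have hz0 := norm_nonneg z
  have hr2 : 0 < 1 - r ^ 2 := by nlinarith
  gcongr

end HyperbolicMeasure

namespace IsDiskMobius

variable {m : ℂ → ℂ} {u v : ℂ}

theorem exists_eq_blaschke (hm : IsDiskMobius m) :
    ∃ a τ, ‖a‖ < 1 ∧ ‖τ‖ = 1 ∧ m = blaschke a τ :=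
  let ⟨a, τ, ha, hτ, h⟩ := hm
  ⟨a, τ, ha, hτ, funext h⟩

theorem norm_apply_lt_one (hm : IsDiskMobius m) (hu : ‖u‖ < 1) : ‖m u‖ < 1 := by
  obtain ⟨a, τ, ha, hτ, rfl⟩ := hm.exists_eq_blaschke
  exact norm_blaschke_lt_one ha hτ hu

theorem sinhSqDist_apply (hm : IsDiskMobius m) (hu : ‖u‖ < 1) (hv : ‖v‖ < 1) :
    sinhSqDist (m u) (m v) = sinhSqDist u v := by
  obtain ⟨a, τ, ha, hτ, rfl⟩ := hm.exists_eq_blaschke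
  exact sinhSqDist_blaschke ha hτ hu hv

theorem setLIntegral_hypDisk (hm : IsDiskMobius m) (R : ℝ) (F : ℂ → ℝ≥0∞) :
    ∫⁻ z in hypDisk (m 0) R, F z ∂volH = ∫⁻ w in hypDisk 0 R, F (m w) ∂volH := by
  obtain ⟨a, τ, ha, hτ, rfl⟩ := hm.exists_eq_blaschke
  rw [← image_blaschke_hypDisk_zero ha hτ, setLIntegral_image_blaschke ha hτ
    (by rw [hypDisk_zero]; exact measurableSet_ball) (hypDisk_zero_subset_unitDisk R)]

end IsDiskMobius

section EuclideanBound

variable {u v X Y : ℂ} {r : ℝ}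

theorem normSq_sub_le_sinhSqDist (hu : ‖u‖ < 1) (hv : ‖v‖ < 1) :
    normSq (u - v) ≤ sinhSqDist u v := by
  have hu' := one_sub_normSq_pos hu
  have hv' := one_sub_normSq_pos hv
  exact le_div_self (normSq_nonneg _) (mul_pos hu' hv')
    (mul_le_one₀ (by linarith [normSq_nonneg u]) hv'.le (by linarith [normSq_nonneg v]))

theorem sinhSqDist_le (hr : r < 1) (hu : ‖u‖ ≤ r) (hv : ‖v‖ ≤ r) :
    sinhSqDist u v ≤ normSq (u - v) / (1 - r ^ 2) ^ 2 := by
  have hr0 : 0 ≤ r := (norm_nonneg u).trans hu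
  have hur : normSq u ≤ r ^ 2 := by rw [← Complex.sq_norm]; gcongr
  have hvr : normSq v ≤ r ^ 2 := by rw [← Complex.sq_norm]; gcongr
  have hr2 : 0 < 1 - r ^ 2 := by nlinarith
  have := normSq_nonneg (u - v)
  rw [sinhSqDist, sq]
  gcongr
  linarith

theorem norm_sub_le_of_sinhSqDist_le (hX : ‖X‖ < 1) (hY : ‖Y‖ < 1) (hr : r < 1)
    (hu : ‖u‖ ≤ r) (hv : ‖v‖ ≤ r) (h : sinhSqDist X Y ≤ sinhSqDist u v) :
    ‖X - Y‖ ≤ ((1 - r) ^ 2)⁻¹ * ‖u - v‖ := by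
  have hr0 : 0 ≤ r := (norm_nonneg u).trans hu
  have hr2 : 0 < 1 - r ^ 2 := by nlinarith
  have hsq : ‖X - Y‖ ^ 2 ≤ (‖u - v‖ / (1 - r ^ 2)) ^ 2 := by
    rw [Complex.sq_norm, div_pow, Complex.sq_norm]
    exact (normSq_sub_le_sinhSqDist hX hY).trans (h.trans (sinhSqDist_le hr hu hv))
  calc ‖X - Y‖ ≤ ‖u - v‖ / (1 - r ^ 2) :=
        (pow_le_pow_iff_left₀ (norm_nonneg _) (by positivity) two_ne_zero).1 hsq
    _ ≤ ((1 - r) ^ 2)⁻¹ * ‖u - v‖ := by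
        rw [div_eq_inv_mul]
        gcongr
        nlinarith

end EuclideanBound

section Quadrature

variable {α ι : Type*} [MeasurableSpace α] {μ : Measure α} {s : Set α} {f : α → ℝ} {c ε : ℝ}

theorem setLIntegral_ofReal_le_mul_add (hf : ∀ x ∈ s, |f x - c| ≤ ε) :
    ∫⁻ x in s, ENNReal.ofReal (f x) ∂μ ≤ μ s * ENNReal.ofReal c + μ s * ENNReal.ofReal ε := by
  calc ∫⁻ x in s, ENNReal.ofReal (f x) ∂μ
      ≤ ∫⁻ _ in s, (ENNReal.ofReal c + ENNReal.ofReal ε) ∂μ :=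
        setLIntegral_mono measurable_const fun x hx =>
          (ENNReal.ofReal_le_ofReal (by linarith [(abs_le.1 (hf x hx)).2])).trans
            ENNReal.ofReal_add_le
    _ = μ s * ENNReal.ofReal c + μ s * ENNReal.ofReal ε := by
        rw [setLIntegral_const, mul_comm, mul_add]

theorem mul_ofReal_le_setLIntegral_add (hs : MeasurableSet s) (hf : ∀ x ∈ s, |f x - c| ≤ ε) :
    μ s * ENNReal.ofReal c ≤ ∫⁻ x in s, ENNReal.ofReal (f x) ∂μ + μ s * ENNReal.ofReal ε := by
  calc μ s * ENNReal.ofReal c = ∫⁻ _ in s, ENNReal.ofReal c ∂μ := by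
        rw [setLIntegral_const, mul_comm]
    _ ≤ ∫⁻ x in s, (ENNReal.ofReal (f x) + ENNReal.ofReal ε) ∂μ :=
        setLIntegral_mono' hs fun x hx =>
          (ENNReal.ofReal_le_ofReal (by linarith [(abs_le.1 (hf x hx)).1])).trans
            ENNReal.ofReal_add_le
    _ = ∫⁻ x in s, ENNReal.ofReal (f x) ∂μ + μ s * ENNReal.ofReal ε := by
        rw [lintegral_add_right _ measurable_const, setLIntegral_const, mul_comm]

variable [Fintype ι] {Δ : ι → Set α} {c : ι → ℝ}

theorem setLIntegral_iUnion_ofReal_le_sum_add (hΔ : ∀ k, MeasurableSet (Δ k))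
    (hdisj : Pairwise (Disjoint on Δ)) (hf : ∀ k, ∀ x ∈ Δ k, |f x - c k| ≤ ε) :
    ∫⁻ x in ⋃ k, Δ k, ENNReal.ofReal (f x) ∂μ
      ≤ ∑ k, μ (Δ k) * ENNReal.ofReal (c k) + μ (⋃ k, Δ k) * ENNReal.ofReal ε := by
  rw [lintegral_iUnion hΔ hdisj, measure_iUnion hdisj hΔ, tsum_fintype, tsum_fintype,
    Finset.sum_mul, ← Finset.sum_add_distrib]
  exact Finset.sum_le_sum fun k _ => setLIntegral_ofReal_le_mul_add (hf k)

theorem sum_le_setLIntegral_iUnion_ofReal_add (hΔ : ∀ k, MeasurableSet (Δ k))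
    (hdisj : Pairwise (Disjoint on Δ)) (hf : ∀ k, ∀ x ∈ Δ k, |f x - c k| ≤ ε) :
    ∑ k, μ (Δ k) * ENNReal.ofReal (c k)
      ≤ ∫⁻ x in ⋃ k, Δ k, ENNReal.ofReal (f x) ∂μ + μ (⋃ k, Δ k) * ENNReal.ofReal ε := by
  rw [lintegral_iUnion hΔ hdisj, measure_iUnion hdisj hΔ, tsum_fintype, tsum_fintype,
    Finset.sum_mul, ← Finset.sum_add_distrib]
  exact Finset.sum_le_sum fun k _ => mul_ofReal_le_setLIntegral_add (hΔ k) (hf k)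

end Quadrature

theorem nonneg_of_abs_sub_le_mul_norm {f : ℂ → ℝ} {C : ℝ}
    (hf : ∀ z ∈ unitDisk, ∀ w ∈ unitDisk, |f z - f w| ≤ C * ‖z - w‖) : 0 ≤ C := by
  have h := (abs_nonneg _).trans (hf 0 (by simp [unitDisk]) (1 / 2) (by norm_num [unitDisk]))
  norm_num at h
  exact h

theorem abs_sub_le_of_lipschitz_of_isDiskMobius {μ ν : ℂ → ℝ} {Cμ Cν : ℝ}
    (hμL : ∀ z ∈ unitDisk, ∀ w ∈ unitDisk, |μ z - μ w| ≤ Cμ * ‖z - w‖)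
    (hνL : ∀ z ∈ unitDisk, ∀ w ∈ unitDisk, |ν z - ν w| ≤ Cν * ‖z - w‖)
    {mt m : ℂ → ℂ} (hmt : IsDiskMobius mt) (hm : IsDiskMobius m) {r h : ℝ} (hr : r < 1)
    {z w : ℂ} (hz : ‖z‖ ≤ r) (hw : ‖w‖ ≤ r) (hzw : ‖z - w‖ ≤ h) :
    abs (|μ (mt z) - ν (m (mt z))| - |μ (mt w) - ν (m (mt w))|)
      ≤ (Cμ + Cν) * ((1 - r) ^ 2)⁻¹ * h := by
  have hz1 : ‖z‖ < 1 := hz.trans_lt hr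
  have hw1 : ‖w‖ < 1 := hw.trans_lt hr
  have hmtz := hmt.norm_apply_lt_one hz1
  have hmtw := hmt.norm_apply_lt_one hw1
  have hdist : sinhSqDist (mt z) (mt w) = sinhSqDist z w := hmt.sinhSqDist_apply hz1 hw1
  have hinner : ‖mt z - mt w‖ ≤ ((1 - r) ^ 2)⁻¹ * h :=
    (norm_sub_le_of_sinhSqDist_le hmtz hmtw hr hz hw hdist.le).trans (by gcongr)
  have houter : ‖m (mt z) - m (mt w)‖ ≤ ((1 - r) ^ 2)⁻¹ * h :=
    (norm_sub_le_of_sinhSqDist_le (hm.norm_apply_lt_one hmtz) (hm.norm_apply_lt_one hmtw) hr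
      hz hw (by rw [hm.sinhSqDist_apply hmtz hmtw, hdist])).trans (by gcongr)
  calc abs (|μ (mt z) - ν (m (mt z))| - |μ (mt w) - ν (m (mt w))|)
      ≤ |(μ (mt z) - μ (mt w)) - (ν (m (mt z)) - ν (m (mt w)))| := by
        rw [sub_sub_sub_comm]; exact abs_abs_sub_abs_le_abs_sub _ _
    _ ≤ |μ (mt z) - μ (mt w)| + |ν (m (mt z)) - ν (m (mt w))| := abs_sub _ _
    _ ≤ Cμ * ‖mt z - mt w‖ + Cν * ‖m (mt z) - m (mt w)‖ :=
        add_le_add (hμL _ hmtz _ hmtw)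
          (hνL _ (hm.norm_apply_lt_one hmtz) _ (hm.norm_apply_lt_one hmtw))
    _ ≤ Cμ * (((1 - r) ^ 2)⁻¹ * h) + Cν * (((1 - r) ^ 2)⁻¹ * h) :=
        add_le_add (mul_le_mul_of_nonneg_left hinner (nonneg_of_abs_sub_le_mul_norm hμL))
          (mul_le_mul_of_nonneg_left houter (nonneg_of_abs_sub_le_mul_norm hνL))
    _ = (Cμ + Cν) * ((1 - r) ^ 2)⁻¹ * h := by ring

theorem quadrature_error_bound_general (μ ν : ℂ → ℝ) (Cμ Cν : ℝ)
    (hμL : ∀ z ∈ unitDisk, ∀ w ∈ unitDisk, |μ z - μ w| ≤ Cμ * ‖z - w‖)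
    (hνL : ∀ z ∈ unitDisk, ∀ w ∈ unitDisk, |ν z - ν w| ≤ Cν * ‖z - w‖)
    (R : ℝ)
    (zi wj : ℂ)
    (mt : ℂ → ℂ) (hmt : IsDiskMobius mt) (hmt0 : mt 0 = zi)
    (h : ℝ) (K : ℕ)
    (Δ : Fin K → Set ℂ) (hΔmeas : ∀ k, MeasurableSet (Δ k))
    (hΔdisj : ∀ k l, k ≠ l → Disjoint (Δ k) (Δ l))
    (hΔcover : (⋃ k, Δ k) = hypDisk 0 R)
    (p : Fin K → ℂ) (hp : ∀ k, p k ∈ Δ k)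
    (hfine : ∀ k, Δ k ⊆ {z : ℂ | ‖z - p k‖ ≤ h}) :
    (dR R μ ν zi wj ≤
        (⨅ m : {m : ℂ → ℂ // IsDiskMobius m ∧ m zi = wj},
          ∑ k, volH (Δ k) * ENNReal.ofReal |μ (mt (p k)) - ν (m.1 (mt (p k)))|)
      + ENNReal.ofReal ((Cμ + Cν) * (volH (hypDisk 0 R)).toReal
          * ((1 - Real.tanh R) ^ 2)⁻¹ * h)) ∧
    ((⨅ m : {m : ℂ → ℂ // IsDiskMobius m ∧ m zi = wj},
          ∑ k, volH (Δ k) * ENNReal.ofReal |μ (mt (p k)) - ν (m.1 (mt (p k)))|)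
      ≤ dR R μ ν zi wj
      + ENNReal.ofReal ((Cμ + Cν) * (volH (hypDisk 0 R)).toReal
          * ((1 - Real.tanh R) ^ 2)⁻¹ * h)) := by
  set ε := (Cμ + Cν) * ((1 - Real.tanh R) ^ 2)⁻¹ * h with hε
  have hr : Real.tanh R < 1 := Real.tanh_lt_one R
  have hcell : ∀ k, ∀ z ∈ Δ k, ‖z‖ ≤ Real.tanh R := fun k z hz => by
    have hzR : z ∈ hypDisk 0 R := hΔcover ▸ Set.mem_iUnion_of_mem k hz
    rw [hypDisk_zero, mem_ball_zero_iff] at hzR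
    exact hzR.le
  have hE : ENNReal.ofReal ((Cμ + Cν) * (volH (hypDisk 0 R)).toReal
      * ((1 - Real.tanh R) ^ 2)⁻¹ * h) = volH (⋃ k, Δ k) * ENNReal.ofReal ε := by
    have hV : volH (hypDisk 0 R) ≠ ⊤ := (hypDisk_zero R ▸ volH_ball_lt_top hr).ne
    rw [hΔcover, show (Cμ + Cν) * (volH (hypDisk 0 R)).toReal * ((1 - Real.tanh R) ^ 2)⁻¹ * h
      = (volH (hypDisk 0 R)).toReal * ε by rw [hε]; ring,
      ENNReal.ofReal_mul ENNReal.toReal_nonneg, ENNReal.ofReal_toReal hV]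
  have hosc (m : {m : ℂ → ℂ // IsDiskMobius m ∧ m zi = wj}) :
      ∀ k, ∀ z ∈ Δ k,
        abs (|μ (mt z) - ν (m.1 (mt z))| - |μ (mt (p k)) - ν (m.1 (mt (p k)))|) ≤ ε :=
    fun k z hz => abs_sub_le_of_lipschitz_of_isDiskMobius hμL hνL hmt m.2.1 hr (hcell k z hz)
      (hcell k _ (hp k)) (hfine k hz)
  have hchange (F : ℂ → ℝ≥0∞) :
      ∫⁻ z in hypDisk zi R, F z ∂volH = ∫⁻ z in ⋃ k, Δ k, F (mt z) ∂volH := by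
    rw [← hmt0, hmt.setLIntegral_hypDisk, hΔcover]
  have hdisj : Pairwise (Disjoint on Δ) := fun k l => hΔdisj k l
  rw [hE]
  constructor
  · refine (iInf_mono fun m => ?_).trans_eq ENNReal.iInf_add.symm
    rw [hchange]
    exact setLIntegral_iUnion_ofReal_le_sum_add hΔmeas hdisj (hosc m)
  · refine (iInf_mono fun m => ?_).trans_eq ENNReal.iInf_add.symm
    rw [hchange]
    exact sum_le_setLIntegral_iUnion_ofReal_add hΔmeas hdisj (hosc m)

theorem quadrature_error_bound (μ ν : ℂ → ℝ) (Cμ Cν : ℝ)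
    (hμL : ∀ z ∈ unitDisk, ∀ w ∈ unitDisk, |μ z - μ w| ≤ Cμ * ‖z - w‖)
    (hνL : ∀ z ∈ unitDisk, ∀ w ∈ unitDisk, |ν z - ν w| ≤ Cν * ‖z - w‖)
    (R : ℝ) (hR : 0 < R)
    (zi wj : ℂ) (hzi : zi ∈ unitDisk) (hwj : wj ∈ unitDisk)
    (mt : ℂ → ℂ) (hmt : IsDiskMobius mt) (hmt0 : mt 0 = zi)
    (h : ℝ) (hh : 0 < h) (K : ℕ)
    (Δ : Fin K → Set ℂ) (hΔmeas : ∀ k, MeasurableSet (Δ k))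
    (hΔdisj : ∀ k l, k ≠ l → Disjoint (Δ k) (Δ l))
    (hΔcover : (⋃ k, Δ k) = hypDisk 0 R)
    (p : Fin K → ℂ) (hp : ∀ k, p k ∈ Δ k)
    (hfine : ∀ k, Δ k ⊆ {z : ℂ | ‖z - p k‖ ≤ h}) :
    (dR R μ ν zi wj ≤
        (⨅ m : {m : ℂ → ℂ // IsDiskMobius m ∧ m zi = wj},
          ∑ k, volH (Δ k) * ENNReal.ofReal |μ (mt (p k)) - ν (m.1 (mt (p k)))|)
      + ENNReal.ofReal ((Cμ + Cν) * (volH (hypDisk 0 R)).toReal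
          * ((1 - Real.tanh R) ^ 2)⁻¹ * h)) ∧
    ((⨅ m : {m : ℂ → ℂ // IsDiskMobius m ∧ m zi = wj},
          ∑ k, volH (Δ k) * ENNReal.ofReal |μ (mt (p k)) - ν (m.1 (mt (p k)))|)
      ≤ dR R μ ν zi wj
      + ENNReal.ofReal ((Cμ + Cν) * (volH (hypDisk 0 R)).toReal
          * ((1 - Real.tanh R) ^ 2)⁻¹ * h)) :=
  quadrature_error_bound_general μ ν Cμ Cν hμL hνL R zi wj mt hmt hmt0 h K Δ hΔmeas hΔdisj hΔcover p
    hp hfine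

end
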